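/- arXiv:1302.0564 — 3 statements merged into one kernel-verified Lean document; each statement's English description precedes it below -/
import Mathlib

section
/- For all integers n ≥ k ≥ 1, the partial Bell polynomial satisfies B_{n,k}(0, 2t₂, 3t₃, 4t₄, …) = C(n,k) · k! · B_{n-k,k}(t₂, t₃, t₄, …), where the arguments of the Bell polynomial on the left are x_j = j·t_j for j ≥ 2 and x₁ = 0, and on the right are x_j = t_{j+1} for j ≥ 1. -/
open scoped Classical

noncomputable section

/-- `π` is a set partition of `{0, …, n-1}` (as a finite set of nonempty blocks
covering every element exactly once). -/
def IsSetPartition (n : ℕ) (π : Finset (Finset (Fin n))) : Prop :=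
  (∀ B ∈ π, B.Nonempty) ∧ ∀ i : Fin n, ∃! B, B ∈ π ∧ i ∈ B

/-- The partial Bell polynomial `B_{n,k}(x₁, x₂, …) = ∑_{π} ∏_{B ∈ π} x_{|B|}`,
the sum being over set partitions of an `n`-set into exactly `k` blocks. -/
noncomputable def bellPoly (n k : ℕ) (x : ℕ → MvPolynomial ℕ ℚ) : MvPolynomial ℕ ℚ :=
  ∑ π ∈ Finset.univ.filter
      (fun π : Finset (Finset (Fin n)) => IsSetPartition n π ∧ π.card = k),
    ∏ B ∈ π, x B.card

/-- The indeterminate `t_j`. -/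
noncomputable def t (j : ℕ) : MvPolynomial ℕ ℚ := MvPolynomial.X j

/-!
Multiplying by `k!` labels the blocks: `k! B_{n,k}(x)` is the sum over surjections
`f : Fin n → Fin k` of `∏ᵢ x_{|f⁻¹ i|}`. For `x_j = j t_j` the factor `∏ᵢ |f⁻¹ i|` counts the
sections `m` of `f`, i.e. the ways to mark one point in every fiber. A pair `(f, m)` is the same
as an injection `m` (`n.descFactorial k = C(n,k) k!` of them) together with the restriction of
`f` to the `n - k` unmarked points, whose fibers are those of `f` minus the marked point. Since
`x₁ = 0` forbids singleton fibers, that restriction is again a surjection, weighted by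
`∏ᵢ t_{|fiber| + 1}`, and summing it gives `k! B_{n-k,k}(t₂, t₃, …)`.
-/

open Finset Function
open scoped Nat

section Fibers

variable {α ι R : Type*} [CommSemiring R]

lemma injective_fiber [Fintype α] [DecidableEq ι] {f : α → ι} (hf : Surjective f) :
    Injective fun i => ({a | f a = i} : Finset α) := by
  intro i j hij
  obtain ⟨a, rfl⟩ := hf i
  simpa using (Finset.ext_iff.1 hij a).1 (by simp)

lemma sum_prod_fiber_equiv [Fintype ι] [DecidableEq ι] {β γ : Type*} [Fintype β] [DecidableEq β]
    [Fintype γ] [DecidableEq γ] (e : β ≃ γ) (w : ℕ → R) :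
    ∑ h : β → ι, ∏ i, w #{b | h b = i} = ∑ h : γ → ι, ∏ i, w #{c | h c = i} :=
  Fintype.sum_equiv (e.arrowCongr (Equiv.refl ι)) _ _ fun h => prod_congr rfl fun i _ => by
    congr 1
    exact card_equiv e fun b => by simp

variable [Fintype α] [DecidableEq α] [Fintype ι] [DecidableEq ι]

def fiberPartition (f : α → ι) : Finset (Finset α) :=
  univ.image fun i => ({a | f a = i} : Finset α)

lemma card_fiberPartition {f : α → ι} (hf : Surjective f) :
    #(fiberPartition f) = Fintype.card ι := by
  rw [fiberPartition, card_image_of_injective _ (injective_fiber hf), card_univ]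

lemma sum_prod_fiber_eq_sum_surjective {w w' : ℕ → R} (hw : w 0 = 0)
    (hww' : ∀ j, j ≠ 0 → w j = w' j) :
    ∑ f : α → ι, ∏ i, w #{a | f a = i} =
      ∑ f : α → ι with Surjective f, ∏ i, w' #{a | f a = i} := by
  rw [← sum_filter_of_ne (p := Surjective)]
  · refine sum_congr rfl fun f hf => prod_congr rfl fun i _ => hww' _ ?_
    obtain ⟨a, rfl⟩ := (mem_filter.1 hf).2 i
    exact card_ne_zero.2 ⟨a, by simp⟩
  · intro f _ hprod
    by_contra hf
    obtain ⟨i, hi⟩ := not_forall.1 hf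
    refine hprod (prod_eq_zero (mem_univ i) ?_)
    rw [filter_false_of_mem fun a _ h => hi ⟨a, h⟩, card_empty, hw]

end Fibers

section Retractions

variable {α ι R : Type*}

def Function.Embedding.retractionEquiv [Fintype ι] [DecidableEq α] (m : ι ↪ α) :
    {f : α → ι // LeftInverse f m} ≃ ({a // a ∉ Set.range m} → ι) where
  toFun f b := f.1 b
  invFun h := ⟨fun a => if ha : a ∈ Set.range m then m.invOfMemRange ⟨a, ha⟩ else h ⟨a, ha⟩,
    fun i => by simp⟩
  left_inv f := by
    ext a
    by_cases ha : a ∈ Set.range m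
    · obtain ⟨i, rfl⟩ := ha
      simp [f.2 i]
    · simp [ha]
  right_inv h := by
    ext b
    simp [b.2]

lemma card_compl_range [Fintype α] [DecidableEq α] [Fintype ι] (m : ι ↪ α) :
    Fintype.card {a // a ∉ Set.range m} = Fintype.card α - Fintype.card ι := by
  rw [Fintype.card_subtype_compl, Set.card_range_of_injective m.injective]

variable [Fintype α] [Fintype ι] [DecidableEq ι]

lemma card_leftInverse (f : α → ι) :
    #{m : ι → α | LeftInverse f m} = ∏ i, #{a | f a = i} := by
  rw [← Fintype.card_piFinset]
  congr 1
  ext m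
  simp [Fintype.mem_piFinset, LeftInverse]

variable [DecidableEq α]

lemma sum_fun_eq_sum_embedding {M : Type*} [AddCommMonoid M] (G : (ι → α) → M)
    (hG : ∀ m, G m ≠ 0 → Injective m) : ∑ m, G m = ∑ m : ι ↪ α, G m := by
  rw [← sum_filter_of_ne fun m _ => hG m, sum_subtype (p := Injective) _ (fun m => by simp)]
  exact Fintype.sum_equiv (Equiv.subtypeInjectiveEquivEmbedding ι α) _ _ fun _ => rfl

lemma card_fiber_eq_card_fiber_compl_add_one {m : ι ↪ α} {f : α → ι} (hf : LeftInverse f m)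
    (i : ι) : #{a | f a = i} = #{b : {a // a ∉ Set.range m} | f b = i} + 1 := by
  have hsplit : ({a | f a = i} : Finset α) =
      insert (m i) (({b : {a // a ∉ Set.range m} | f b = i} : Finset _).map
        (Embedding.subtype _)) := by
    ext a
    by_cases ha : a ∈ Set.range m
    · obtain ⟨j, rfl⟩ := ha
      simp [hf j]
    · simp only [Set.mem_range, not_exists] at ha
      have hne : a ≠ m i := fun h => ha i h.symm
      simp [ha, hne]
  rw [hsplit, card_insert_of_notMem (by simp), card_map]

variable [CommSemiring R]

lemma sum_leftInverse_prod_fiber (m : ι ↪ α) (w : ℕ → R) :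
    ∑ f : α → ι with LeftInverse f m, ∏ i, w #{a | f a = i} =
      ∑ h : {a // a ∉ Set.range m} → ι, ∏ i, w (#{b | h b = i} + 1) := by
  rw [sum_subtype (p := fun f : α → ι => LeftInverse f m) _ (by simp)]
  exact Fintype.sum_equiv m.retractionEquiv _ _ fun f => prod_congr rfl fun i _ => by
    rw [card_fiber_eq_card_fiber_compl_add_one f.2]; rfl

theorem sum_prod_card_fiber_mul_eq_descFactorial_mul (w : ℕ → R) :
    ∑ f : α → ι, ∏ i, (#{a | f a = i} * w #{a | f a = i}) =
      (Fintype.card α).descFactorial (Fintype.card ι) *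
        ∑ h : Fin (Fintype.card α - Fintype.card ι) → ι, ∏ i, w (#{b | h b = i} + 1) := by
  calc ∑ f : α → ι, ∏ i, (#{a | f a = i} * w #{a | f a = i})
      = ∑ f : α → ι, ∑ m : ι → α with LeftInverse f m, ∏ i, w #{a | f a = i} := by
        refine sum_congr rfl fun f _ => ?_
        rw [prod_mul_distrib, ← Nat.cast_prod, ← card_leftInverse, sum_const, nsmul_eq_mul]
    _ = ∑ m : ι → α, ∑ f : α → ι with LeftInverse f m, ∏ i, w #{a | f a = i} :=
        sum_comm' (by simp)
    _ = ∑ m : ι ↪ α, ∑ f : α → ι with LeftInverse f m, ∏ i, w #{a | f a = i} := by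
        refine sum_fun_eq_sum_embedding
          (fun m => ∑ f : α → ι with LeftInverse f m, ∏ i, w #{a | f a = i}) fun m hm => ?_
        obtain ⟨f, hf, -⟩ := exists_ne_zero_of_sum_ne_zero hm
        exact LeftInverse.injective (mem_filter.1 hf).2
    _ = ∑ m : ι ↪ α, ∑ h : Fin (Fintype.card α - Fintype.card ι) → ι,
          ∏ i, w (#{b | h b = i} + 1) := by
        refine sum_congr rfl fun m _ => ?_
        rw [sum_leftInverse_prod_fiber,
          sum_prod_fiber_equiv (Fintype.equivFinOfCardEq (card_compl_range m)) (w <| · + 1)]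
    _ = _ := by rw [sum_const, card_univ, Fintype.card_embedding_eq, nsmul_eq_mul]

end Retractions

lemma isSetPartition_fiberPartition {n k : ℕ} {f : Fin n → Fin k} (hf : Surjective f) :
    IsSetPartition n (fiberPartition f) := by
  refine ⟨fun B hB => ?_, fun a => ⟨({b | f b = f a} : Finset (Fin n)),
    ⟨mem_image_of_mem _ (mem_univ _), by simp⟩, ?_⟩⟩
  · obtain ⟨i, -, rfl⟩ := mem_image.1 hB
    obtain ⟨a, rfl⟩ := hf i
    exact ⟨a, by simp⟩
  · rintro B ⟨hB, haB⟩
    obtain ⟨i, -, rfl⟩ := mem_image.1 hB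
    rw [(mem_filter.1 haB).2]

namespace IsSetPartition

variable {n k : ℕ} {π : Finset (Finset (Fin n))}

def block (hπ : IsSetPartition n π) (a : Fin n) : Finset (Fin n) := (hπ.2 a).exists.choose

lemma block_mem (hπ : IsSetPartition n π) (a : Fin n) : hπ.block a ∈ π :=
  (hπ.2 a).exists.choose_spec.1

lemma mem_block (hπ : IsSetPartition n π) (a : Fin n) : a ∈ hπ.block a :=
  (hπ.2 a).exists.choose_spec.2

lemma block_eq_iff (hπ : IsSetPartition n π) {B : Finset (Fin n)} (hB : B ∈ π) {a : Fin n} :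
    hπ.block a = B ↔ a ∈ B :=
  ⟨fun h => h ▸ hπ.mem_block a,
    fun ha => (hπ.2 a).unique ⟨hπ.block_mem a, hπ.mem_block a⟩ ⟨hB, ha⟩⟩

def labeling (hπ : IsSetPartition n π) (e : Fin k ≃ π) (a : Fin n) : Fin k :=
  e.symm ⟨hπ.block a, hπ.block_mem a⟩

lemma fiber_labeling (hπ : IsSetPartition n π) (e : Fin k ≃ π) (i : Fin k) :
    ({a | hπ.labeling e a = i} : Finset (Fin n)) = e i := by
  ext a
  rw [mem_filter, labeling, Equiv.symm_apply_eq, Subtype.ext_iff, hπ.block_eq_iff (e i).2]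
  simp

lemma surjective_labeling (hπ : IsSetPartition n π) (e : Fin k ≃ π) :
    Surjective (hπ.labeling e) := by
  intro i
  obtain ⟨a, ha⟩ := hπ.1 _ (e i).2
  exact ⟨a, by simpa [← hπ.fiber_labeling e i] using ha⟩

lemma fiberPartition_labeling (hπ : IsSetPartition n π) (e : Fin k ≃ π) :
    fiberPartition (hπ.labeling e) = π := by
  ext B
  simp only [fiberPartition, fiber_labeling, mem_image, mem_univ, true_and]
  exact ⟨fun ⟨i, hi⟩ => hi ▸ (e i).2, fun hB => ⟨e.symm ⟨B, hB⟩, by simp⟩⟩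

def labelingEquiv (hπ : IsSetPartition n π) :
    {f : Fin n → Fin k // Surjective f ∧ fiberPartition f = π} ≃ (Fin k ≃ π) where
  toFun f := Equiv.ofBijective
    (fun i => ⟨({a | f.1 a = i} : Finset (Fin n)),
      f.2.2.subst (motive := (_ ∈ ·)) (mem_image_of_mem _ (mem_univ i))⟩)
    ⟨fun i j h => injective_fiber f.2.1 (congrArg Subtype.val h), fun B => by
      obtain ⟨i, -, hi⟩ := mem_image.1 (f.2.2.symm ▸ B.2 : B.1 ∈ fiberPartition f.1)
      exact ⟨i, Subtype.ext hi⟩⟩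
  invFun e := ⟨hπ.labeling e, hπ.surjective_labeling e, hπ.fiberPartition_labeling e⟩
  left_inv f := by
    refine Subtype.ext (funext fun a => (Equiv.symm_apply_eq _).2 (Subtype.ext ?_))
    exact (hπ.block_eq_iff (Subtype.property _)).2 (mem_filter.2 ⟨mem_univ a, rfl⟩)
  right_inv e := by
    ext i : 2
    exact hπ.fiber_labeling e i

lemma card_labelings (hπ : IsSetPartition n π) (hk : #π = k) :
    #{f : Fin n → Fin k | Surjective f ∧ fiberPartition f = π} = k ! := by
  rw [← Fintype.card_subtype, Fintype.card_congr hπ.labelingEquiv,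
    Fintype.card_equiv (Fintype.equivFinOfCardEq (by simpa using hk)).symm, Fintype.card_fin]

end IsSetPartition

theorem sum_surjective_prod_fiber_eq_factorial_mul_bellPoly (n k : ℕ)
    (x : ℕ → MvPolynomial ℕ ℚ) :
    ∑ f : Fin n → Fin k with Surjective f, ∏ i, x #{a | f a = i} = k ! * bellPoly n k x := by
  have hmaps : ∀ f ∈ ({f | Surjective f} : Finset (Fin n → Fin k)),
      fiberPartition f ∈ ({π | IsSetPartition n π ∧ #π = k} : Finset _) := fun f hf => by
    have hf : Surjective f := (mem_filter.1 hf).2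
    simpa using ⟨isSetPartition_fiberPartition hf,
      (card_fiberPartition hf).trans (Fintype.card_fin k)⟩
  calc ∑ f : Fin n → Fin k with Surjective f, ∏ i, x #{a | f a = i}
      = ∑ f : Fin n → Fin k with Surjective f, ∏ B ∈ fiberPartition f, x #B :=
        sum_congr rfl fun f hf => (prod_image (f := fun B => x #B)
          fun i _ j _ h => injective_fiber (mem_filter.1 hf).2 h).symm
    _ = ∑ π with IsSetPartition n π ∧ #π = k,
          ∑ f : Fin n → Fin k with Surjective f ∧ fiberPartition f = π, ∏ B ∈ π, x #B := by
        rw [← sum_fiberwise_of_maps_to hmaps]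
        refine sum_congr rfl fun π _ => ?_
        rw [filter_filter]
        exact sum_congr rfl fun f hf => by rw [(mem_filter.1 hf).2.2]
    _ = k ! * bellPoly n k x := by
        rw [bellPoly, mul_sum]
        refine sum_congr rfl fun π hπ => ?_
        rw [sum_const, (mem_filter.1 hπ).2.1.card_labelings (mem_filter.1 hπ).2.2, nsmul_eq_mul]

theorem bell_pointed_eq_choose_mul_bell_general (n k : ℕ) :
    bellPoly n k (fun j => if j = 1 then 0 else (j : MvPolynomial ℕ ℚ) * t j)
      = (n.choose k : MvPolynomial ℕ ℚ) * (Nat.factorial k : MvPolynomial ℕ ℚ) *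
        bellPoly (n - k) k (fun j => t (j + 1)) := by
  set q : ℕ → MvPolynomial ℕ ℚ := fun j => if j = 1 then 0 else t j
  have hpointed : (fun j : ℕ => if j = 1 then 0 else (j : MvPolynomial ℕ ℚ) * t j) =
      fun j => j * q j := by
    funext j
    split_ifs <;> simp [q, *]
  have hfact : (k ! : MvPolynomial ℕ ℚ) ≠ 0 := Nat.cast_ne_zero.2 k.factorial_ne_zero
  refine mul_left_cancel₀ hfact ?_
  calc (k ! : MvPolynomial ℕ ℚ) * bellPoly n k (fun j => if j = 1 then 0 else j * t j)
      = ∑ f : Fin n → Fin k, ∏ i, (#{a | f a = i} * q #{a | f a = i}) := by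
        rw [hpointed, ← sum_surjective_prod_fiber_eq_factorial_mul_bellPoly,
          sum_prod_fiber_eq_sum_surjective (w := fun j => j * q j) (by simp) fun _ _ => rfl]
    _ = n.descFactorial k * ∑ h : Fin (n - k) → Fin k, ∏ i, q (#{b | h b = i} + 1) := by
        have := sum_prod_card_fiber_mul_eq_descFactorial_mul (α := Fin n) (ι := Fin k) q
        rwa [Fintype.card_fin, Fintype.card_fin] at this
    _ = n.descFactorial k * (k ! * bellPoly (n - k) k fun j => t (j + 1)) := by
        rw [← sum_surjective_prod_fiber_eq_factorial_mul_bellPoly,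
          sum_prod_fiber_eq_sum_surjective (w := fun j => q (j + 1)) (w' := fun j => t (j + 1))
            (by simp [q]) fun j hj => by simp [q, hj]]
    _ = _ := by
        rw [Nat.descFactorial_eq_factorial_mul_choose]
        push_cast
        ring

/-- For `n ≥ k ≥ 1`,
`B_{n,k}(0, 2t₂, 3t₃, …) = C(n,k) ⬝ k! ⬝ B_{n-k,k}(t₂, t₃, t₄, …)`. -/
theorem bell_pointed_eq_choose_mul_bell (n k : ℕ) (hk : 1 ≤ k) (hkn : k ≤ n) :
    bellPoly n k (fun j => if j = 1 then 0 else (j : MvPolynomial ℕ ℚ) * t j)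
      = (n.choose k : MvPolynomial ℕ ℚ) * (Nat.factorial k : MvPolynomial ℕ ℚ) *
        bellPoly (n - k) k (fun j => t (j + 1)) :=
  bell_pointed_eq_choose_mul_bell_general n k
end
end

section
/- A pointed connected simple graph (g, v₀) is a prime structure of the pointed-graph operad 𝒢_c^• (i.e., admits only trivial factorizations under the operad product) if and only if g is nonseparable (2-connected, i.e., has no cutpoint). -/
open scoped Classical

noncomputable section

/-- The operad product of the operad `𝒢_c^•` of pointed connected graphs.
The assembly is encoded by a graph `h` (its connected components are the
blocks, each with the induced connected graph), a choice `pt` of a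
distinguished vertex in each component (constant on components), and an
external graph `g'` on the components.  All edges of `h` are kept and the
distinguished vertices of adjacent (in `g'`) components get joined. -/
def etaP {V : Type} (h : SimpleGraph V) (pt : V → V)
    (g' : SimpleGraph h.ConnectedComponent) : SimpleGraph V :=
  SimpleGraph.fromRel fun u v =>
    h.Adj u v ∨
      (g'.Adj (h.connectedComponentMk u) (h.connectedComponentMk v) ∧ u = pt u ∧ v = pt v)

/-- `(h, pt, g')` is a factorization of the pointed connected graph `(g, v₀)`
in the pointed graph operad. -/
def IsPointedFactorization {V : Type} (g : SimpleGraph V) (v₀ : V)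
    (h : SimpleGraph V) (pt : V → V) (g' : SimpleGraph h.ConnectedComponent) : Prop :=
  (∀ v, h.connectedComponentMk (pt v) = h.connectedComponentMk v) ∧
  (∀ u v, h.connectedComponentMk u = h.connectedComponentMk v → pt u = pt v) ∧
  g'.Connected ∧ pt v₀ = v₀ ∧ etaP h pt g' = g

/-!
If `v` is a cutpoint, pick a component `K` of `g - v` missing `v₀` (when `v₀ ≠ v`). Taking `K ∪ {v}`
as one block with distinguished vertex `v` and every other vertex as a singleton block factors
`(g, v₀)` nontrivially, since every edge leaving `K ∪ {v}` starts at `v`.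

Conversely, in a nontrivial factorization some block `A` has an edge but is not everything. Only
distinguished vertices carry edges between blocks, so if `c` is the distinguished vertex of `A`,
then `A \ {c}` is closed in `g - c`, and `c` is a cutpoint.
-/

open SimpleGraph

variable {V : Type}

lemma etaP_adj {h : SimpleGraph V} {pt : V → V} {g' : SimpleGraph h.ConnectedComponent}
    {u w : V} : (etaP h pt g').Adj u w ↔ h.Adj u w ∨
      (g'.Adj (h.connectedComponentMk u) (h.connectedComponentMk w) ∧ u = pt u ∧ w = pt w) := by
  simp only [etaP, fromRel_adj]
  constructor
  · rintro ⟨-, huw | hwu⟩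
    · exact huw
    · rcases hwu with hwu | ⟨hg', hw, hu⟩
      · exact .inl hwu.symm
      · exact .inr ⟨hg'.symm, hu, hw⟩
  · rintro (huw | ⟨hg', hu, hw⟩)
    · exact ⟨huw.ne, .inl (.inl huw)⟩
    · exact ⟨fun e => hg'.ne (congrArg _ e), .inl (.inr ⟨hg', hu, hw⟩)⟩

namespace IsPointedFactorization

variable {g h : SimpleGraph V} {v₀ : V} {pt : V → V} {g' : SimpleGraph h.ConnectedComponent}

lemma adj_of_ne_pt (hf : IsPointedFactorization g v₀ h pt g') {p q : V} (hpq : g.Adj p q)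
    (hp : p ≠ pt p) : h.Adj p q := by
  rw [← hf.2.2.2.2, etaP_adj] at hpq
  exact hpq.resolve_right fun hr => hp hr.2.1

theorem eq_bot_or_connected (hf : IsPointedFactorization g v₀ h pt g')
    (hns : ∀ v, (g.induce {u | u ≠ v}).Connected) : h = ⊥ ∨ h.Connected := by
  rw [or_iff_not_imp_left, ← ne_eq, ne_bot_iff_exists_adj, connected_iff_exists_forall_reachable]
  rintro ⟨a, b, hab⟩
  refine ⟨a, fun w => ?_⟩
  by_contra haw
  set c := pt a
  obtain ⟨b', hab', hb'c⟩ : ∃ b', h.Reachable a b' ∧ b' ≠ c := by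
    by_cases hac : a = c
    · exact ⟨b, hab.reachable, fun e => hab.ne' (e.trans hac.symm)⟩
    · exact ⟨a, .rfl, hac⟩
  have hwc : w ≠ c := by
    rintro rfl
    exact haw (ConnectedComponent.exact (hf.1 a)).symm
  obtain ⟨d, -, hd₁, hd₂⟩ := ((hns c).preconnected ⟨b', hb'c⟩ ⟨w, hwc⟩).some.exists_boundary_dart
    {p | h.Reachable a p.1} hab' haw
  have hd : pt d.fst.1 = c := hf.2.1 _ _ (ConnectedComponent.sound hd₁.symm)
  exact hd₂ (hd₁.trans (hf.adj_of_ne_pt d.adj (hd.symm ▸ d.fst.2)).reachable)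

end IsPointedFactorization

namespace SimpleGraph

lemma reachable_spanningCoe {s : Set V} {H : SimpleGraph s} {p q : V}
    (hpq : H.spanningCoe.Reachable p q) : p = q ∨ p ∈ s ∧ q ∈ s := by
  have mem {x y : V} (hxy : x ≠ y) (h : H.spanningCoe.Reachable x y) : x ∈ s := by
    obtain ⟨x', -, rfl⟩ := support_spanningCoe H ▸ mem_support_of_reachable hxy h
    exact x'.2
  by_cases hne : p = q
  · exact .inl hne
  · exact .inr ⟨mem hne hpq, mem (Ne.symm hne) hpq.symm⟩

lemma spanningCoe_induce_adj {g : SimpleGraph V} {B : Set V} {a b : V} (hab : g.Adj a b)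
    (ha : a ∈ B) (hb : b ∈ B) : (g.induce B).spanningCoe.Adj a b :=
  ⟨hab.ne, ⟨a, ha⟩, ⟨b, hb⟩, hab, rfl, rfl⟩

lemma Connected.of_adj_connectedComponentMk {g h : SimpleGraph V}
    {G : SimpleGraph h.ConnectedComponent} (hg : g.Connected)
    (hadj : ∀ a b, g.Adj a b → h.connectedComponentMk a = h.connectedComponentMk b ∨
      G.Adj (h.connectedComponentMk a) (h.connectedComponentMk b)) : G.Connected := by
  have := hg.nonempty
  refine ⟨fun X Y => ?_⟩
  induction X using ConnectedComponent.ind with | h a => ?_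
  induction Y using ConnectedComponent.ind with | h b => ?_
  rw [reachable_iff_reflTransGen]
  refine Relation.ReflTransGen.lift' _ (fun x y hxy => ?_) _ _
    ((reachable_iff_reflTransGen _ _).1 (hg.preconnected a b))
  rcases hadj x y hxy with hxy' | hxy'
  · show Relation.ReflTransGen _ _ _
    rw [hxy']
  · exact .single hxy'

end SimpleGraph

def pointQuotient (g h : SimpleGraph V) (pt : V → V) : SimpleGraph h.ConnectedComponent :=
  fromRel fun X Y => g.Adj (pt X.out) (pt Y.out)

lemma pointQuotient_adj_mk {g h : SimpleGraph V} {pt : V → V}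
    (hpt : ∀ u w, h.connectedComponentMk u = h.connectedComponentMk w → pt u = pt w) {a b : V} :
    (pointQuotient g h pt).Adj (h.connectedComponentMk a) (h.connectedComponentMk b) ↔
      h.connectedComponentMk a ≠ h.connectedComponentMk b ∧ g.Adj (pt a) (pt b) := by
  have hout (x : V) : pt (h.connectedComponentMk x).out = pt x :=
    hpt _ _ (h.connectedComponentMk x).out_eq
  simp only [pointQuotient, fromRel_adj, hout, g.adj_comm (pt b), or_self]

section Block

variable {g : SimpleGraph V} {B : Set V} {v : V}

def blockPoint (B : Set V) (v u : V) : V := if u ∈ B then v else u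

lemma spanningCoe_induce_connectedComponentMk_eq_iff
    (hB : ∀ u ∈ B, (g.induce B).spanningCoe.Reachable v u) {a b : V} :
    (g.induce B).spanningCoe.connectedComponentMk a =
      (g.induce B).spanningCoe.connectedComponentMk b ↔ a = b ∨ a ∈ B ∧ b ∈ B := by
  rw [ConnectedComponent.eq]
  refine ⟨reachable_spanningCoe, ?_⟩
  rintro (rfl | ⟨ha, hb⟩)
  · rfl
  · exact (hB a ha).symm.trans (hB b hb)

lemma blockPoint_eq_self_of_adj (hcut : ∀ a b, g.Adj a b → a ∈ B → b ∉ B → a = v) {a b : V}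
    (hab : g.Adj a b) (hB : ¬(a ∈ B ∧ b ∈ B)) : blockPoint B v a = a := by
  by_cases ha : a ∈ B
  · rw [blockPoint, if_pos ha, hcut a b hab ha fun hb => hB ⟨ha, hb⟩]
  · rw [blockPoint, if_neg ha]

theorem isPointedFactorization_block {v₀ : V} (hg : g.Connected)
    (hB : ∀ u ∈ B, (g.induce B).spanningCoe.Reachable v u)
    (hcut : ∀ a b, g.Adj a b → a ∈ B → b ∉ B → a = v) (hv₀ : v₀ ∈ B → v₀ = v) :
    IsPointedFactorization g v₀ (g.induce B).spanningCoe (blockPoint B v)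
      (pointQuotient g (g.induce B).spanningCoe (blockPoint B v)) := by
  set h := (g.induce B).spanningCoe
  set pt := blockPoint B v
  have hpt_const (a b : V) (hab : h.connectedComponentMk a = h.connectedComponentMk b) :
      pt a = pt b := by
    rcases (spanningCoe_induce_connectedComponentMk_eq_iff hB).1 hab with rfl | ⟨ha, hb⟩
    · rfl
    · simp only [pt, blockPoint, if_pos ha, if_pos hb]
  have hcross {a b : V} (hab : g.Adj a b) (hB' : ¬(a ∈ B ∧ b ∈ B)) :
      (pointQuotient g h pt).Adj (h.connectedComponentMk a) (h.connectedComponentMk b) ∧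
        pt a = a ∧ pt b = b := by
    have ha : pt a = a := blockPoint_eq_self_of_adj hcut hab hB'
    have hb : pt b = b := blockPoint_eq_self_of_adj hcut hab.symm (by tauto)
    refine ⟨(pointQuotient_adj_mk hpt_const).2 ⟨?_, by rwa [ha, hb]⟩, ha, hb⟩
    rw [Ne, spanningCoe_induce_connectedComponentMk_eq_iff hB]
    exact not_or.2 ⟨hab.ne, hB'⟩
  refine ⟨fun u => ?_, hpt_const, ?_, ?_, ?_⟩
  · by_cases hu : u ∈ B
    · simp only [pt, blockPoint, if_pos hu]
      exact ConnectedComponent.sound (hB u hu)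
    · simp only [pt, blockPoint, if_neg hu]
  · refine hg.of_adj_connectedComponentMk fun x y hxy => ?_
    by_cases hxyB : x ∈ B ∧ y ∈ B
    · exact .inl ((spanningCoe_induce_connectedComponentMk_eq_iff hB).2 (.inr hxyB))
    · exact .inr (hcross hxy hxyB).1
  · by_cases hv₀B : v₀ ∈ B
    · simp only [pt, blockPoint, hv₀ hv₀B, ite_self]
    · simp only [pt, blockPoint, if_neg hv₀B]
  · ext a b
    rw [etaP_adj]
    constructor
    · rintro (hab | ⟨hab, ha, hb⟩)
      · exact spanningCoe_induce_le g B hab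
      · rw [ha, hb]
        exact ((pointQuotient_adj_mk hpt_const).1 hab).2
    · intro hab
      by_cases habB : a ∈ B ∧ b ∈ B
      · exact .inl (spanningCoe_induce_adj hab habB.1 habB.2)
      · obtain ⟨hq, ha, hb⟩ := hcross hab habB
        exact .inr ⟨hq, ha.symm, hb.symm⟩

end Block

section Branch

variable {g : SimpleGraph V} {v : V}

/-- The branch of `g` at `v` through the component `K` of `g - v`: `v` belongs vacuously, any
other vertex iff its component in `g - v` is `K`. -/
def branch (K : (g.induce {u | u ≠ v}).ConnectedComponent) : Set V :=
  {u | ∀ hu : u ≠ v, (g.induce {u | u ≠ v}).connectedComponentMk ⟨u, hu⟩ = K}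

variable (K : (g.induce {u | u ≠ v}).ConnectedComponent)

lemma mem_branch_self : v ∈ branch K := fun hv => absurd rfl hv

lemma eq_of_adj_of_mem_branch {a b : V} (hab : g.Adj a b) (ha : a ∈ branch K)
    (hb : b ∉ branch K) : a = v := by
  by_contra hav
  simp only [branch, Set.mem_ofPred_eq, not_forall] at hb
  obtain ⟨hbv, hbK⟩ := hb
  have hab' : (g.induce {u | u ≠ v}).Adj ⟨a, hav⟩ ⟨b, hbv⟩ := hab
  exact hbK ((ConnectedComponent.sound hab'.reachable).symm.trans (ha hav))

lemma exists_adj_mem_branch (hg : g.Connected) {w : V} (hw : w ∉ branch K) :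
    ∃ c ∈ branch K, c ≠ v ∧ g.Adj v c := by
  obtain ⟨x, hx⟩ := K.exists_rep
  obtain ⟨d, -, ⟨hd₁, hd₁v⟩, hd₂⟩ := (hg.preconnected x.1 w).some.exists_boundary_dart
    {u | u ∈ branch K ∧ u ≠ v} ⟨fun _ => hx, x.2⟩ fun h => hw h.1
  have hd₂v : d.snd = v := by
    by_contra hne
    refine hd₂ ⟨not_not.1 fun hd₂K => hd₁v ?_, hne⟩
    exact eq_of_adj_of_mem_branch K d.adj hd₁ hd₂K
  exact ⟨d.fst, hd₁, hd₁v, hd₂v ▸ d.adj.symm⟩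

lemma reachable_of_mem_branch (hg : g.Connected) {w : V} (hw : w ∉ branch K) {u : V}
    (hu : u ∈ branch K) : (g.induce (branch K)).spanningCoe.Reachable v u := by
  obtain ⟨c, hc, hcv, hvc⟩ := exists_adj_mem_branch K hg hw
  by_cases huv : u = v
  · rw [huv]
  let φ : K.toSimpleGraph →g (g.induce (branch K)).spanningCoe :=
    ⟨fun x => x.1.1, fun {x y} hxy => spanningCoe_induce_adj hxy (fun _ => x.2) (fun _ => y.2)⟩
  exact (spanningCoe_induce_adj hvc (mem_branch_self K) hc).reachable.trans
    ((K.reachable_toSimpleGraph (hc hcv) (hu huv)).map φ)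

end Branch

theorem exists_isPointedFactorization_of_not_connected_induce [Nontrivial V]
    {g : SimpleGraph V} (hg : g.Connected) (v₀ v : V)
    (hv : ¬(g.induce {u | u ≠ v}).Connected) :
    ∃ (h : SimpleGraph V) (pt : V → V) (g' : SimpleGraph h.ConnectedComponent),
      IsPointedFactorization g v₀ h pt g' ∧ h ≠ ⊥ ∧ ¬h.Connected := by
  obtain ⟨w, hwv₀⟩ : ∃ w : {u | u ≠ v}, v₀ ≠ v → w.1 = v₀ := by
    by_cases hv₀ : v₀ = v
    · obtain ⟨u, hu⟩ := exists_ne v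
      exact ⟨⟨u, hu⟩, fun h => absurd hv₀ h⟩
    · exact ⟨⟨v₀, hv₀⟩, fun _ => rfl⟩
  obtain ⟨x, hwx⟩ : ∃ x, ¬(g.induce {u | u ≠ v}).Reachable w x := by
    by_contra! hw
    exact hv ((connected_iff_exists_forall_reachable _).2 ⟨w, hw⟩)
  set K := (g.induce {u | u ≠ v}).connectedComponentMk x
  have hw : w.1 ∉ branch K := fun h => hwx (ConnectedComponent.exact (h w.2))
  have hv₀ : v₀ ∈ branch K → v₀ = v := fun h => by_contra fun hv₀ => hw (hwv₀ hv₀ ▸ h)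
  refine ⟨_, _, _, isPointedFactorization_block hg (fun _ => reachable_of_mem_branch K hg hw)
    (fun _ _ => eq_of_adj_of_mem_branch K) hv₀, fun hbot => ?_, fun hconn => ?_⟩
  · obtain ⟨c, hc, -, hvc⟩ := exists_adj_mem_branch K hg hw
    simpa [hbot] using spanningCoe_induce_adj hvc (mem_branch_self K) hc
  · rcases reachable_spanningCoe (hconn.preconnected v w) with h | ⟨-, h⟩
    · exact w.2 h.symm
    · exact hw h

/-- A pointed connected graph `(g, v₀)` is a prime structure of the pointed
graph operad (it admits only trivial factorizations, i.e. in any factorization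
the assembly either consists of singletons, `h = ⊥`, or of the single block
`U`, `h` connected) if and only if `g` is nonseparable: no vertex is a
cutpoint. -/
theorem pointed_graph_prime_iff_nonseparable {V : Type} [Fintype V]
    (g : SimpleGraph V) (v₀ : V) (hg : g.Connected) (hV : 2 ≤ Fintype.card V) :
    (∀ (h : SimpleGraph V) (pt : V → V) (g' : SimpleGraph h.ConnectedComponent),
        IsPointedFactorization g v₀ h pt g' → h = ⊥ ∨ h.Connected)
      ↔ ∀ v : V, (SimpleGraph.induce {u : V | u ≠ v} g).Connected := by
  have : Nontrivial V := Fintype.one_lt_card_iff_nontrivial.1 hV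
  refine ⟨fun hprime v => ?_, fun hns h pt g' hf => hf.eq_bot_or_connected hns⟩
  by_contra hv
  obtain ⟨h, pt, g', hf, hbot, hconn⟩ :=
    exists_isPointedFactorization_of_not_connected_induce hg v₀ v hv
  exact (hprime h pt g' hf).elim hbot hconn
end
end

section
/- Let g be a connected simple graph on vertex set U and B ⊆ U with |B| ≥ 1. Let g_B be the induced subgraph on B and let g₁ be the assembly consisting of g_B together with singleton graphs on all vertices of U − B. Then g₁ divides g in the graph operad (i.e., there exists a connected graph g' on the blocks of the corresponding partition with η(g₁, g') = g) if and only if B is a module of g, i.e., every vertex v ∈ U − B adjacent to some vertex of B is adjacent to every vertex of B. Moreover, when B is a module, the quotient graph g' is unique (it is the contraction of B to a point). -/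
open scoped Classical

noncomputable section

/-- The setoid on `V` collapsing the set `B` to a point (the partition of `V`
whose only possibly-non-singleton block is `B`). -/
def collapse {V : Type} (B : Set V) : Setoid V :=
  ⟨fun u v => u = v ∨ (u ∈ B ∧ v ∈ B), by
    constructor
    · exact fun _ => Or.inl rfl
    · exact fun h => h.imp Eq.symm fun hh => ⟨hh.2, hh.1⟩
    · rintro x y z (rfl | hxy) h
      · exact h
      · rcases h with rfl | hyz
        · exact Or.inr hxy
        · exact Or.inr ⟨hxy.1, hyz.2⟩⟩

/-- The assembly `g₁` determined by `B`: the subgraph of `g` generated by `B`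
together with singleton graphs on the remaining vertices. -/
def asmGraph {V : Type} (g : SimpleGraph V) (B : Set V) : SimpleGraph V :=
  SimpleGraph.fromRel fun u v => g.Adj u v ∧ u ∈ B ∧ v ∈ B

/-- The operad product `η(g₁, g')` of the assembly determined by `B` with an
external graph `g'` on the blocks (the quotient collapsing `B`): all internal
edges of `g₁` plus complete joins between blocks adjacent in `g'`. -/
def etaQ {V : Type} (g₁ : SimpleGraph V) (B : Set V)
    (g' : SimpleGraph (Quotient (collapse B))) : SimpleGraph V :=
  SimpleGraph.fromRel fun u v =>
    g₁.Adj u v ∨ g'.Adj (Quotient.mk (collapse B) u) (Quotient.mk (collapse B) v)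

/-!
Write `π : V → V/B` for the map collapsing `B`. Since `g₁` has no edges leaving `B`, an edge
`uv` of `η(g₁, g')` with `π u ≠ π v` is exactly an edge `π u π v` of `g'`; this determines `g'`
from `η(g₁, g')`, and, applied to `v ∉ B` and two vertices of `B` (which have the same image
under `π`), shows that `B` is a module whenever `η(g₁, g') = g`. Conversely, if `B` is a module,
then the edges of `g` between different blocks are exactly the lifts of the edges of the
contraction `g.map π`, so `η(g₁, g.map π) = g`; and `g.map π` is connected because `g` is.
-/

namespace SimpleGraph

variable {V W : Type*} {G : SimpleGraph V}

theorem Reachable.map_apply (f : V → W) {u v : V} (h : G.Reachable u v) :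
    (G.map f).Reachable (f u) (f v) := by
  obtain ⟨p⟩ := h
  induction p with
  | nil => rfl
  | @cons a b _ hab _ ih =>
    refine Reachable.trans ?_ ih
    by_cases hf : f a = f b
    · rw [hf]
    · exact (map_adj_apply' hab hf).reachable

theorem Connected.map_of_surjective {f : V → W} (hf : Function.Surjective f)
    (hG : G.Connected) : (G.map f).Connected :=
  haveI := hG.nonempty.map f
  Connected.mk (hf.forall₂.2 fun _ _ => (hG _ _).map_apply f)

end SimpleGraph

section Collapse

variable {V : Type} {B : Set V} {g : SimpleGraph V} {u v : V}

theorem mk_collapse_eq_iff :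
    Quotient.mk (collapse B) u = Quotient.mk (collapse B) v ↔ u = v ∨ u ∈ B ∧ v ∈ B :=
  Quotient.eq

theorem asmGraph_adj : (asmGraph g B).Adj u v ↔ g.Adj u v ∧ u ∈ B ∧ v ∈ B := by
  simp only [asmGraph, SimpleGraph.fromRel_adj]
  grind [SimpleGraph.Adj.ne, SimpleGraph.Adj.symm]

theorem etaQ_adj {g₁ : SimpleGraph V} {g' : SimpleGraph (Quotient (collapse B))} :
    (etaQ g₁ B g').Adj u v ↔
      u ≠ v ∧ (g₁.Adj u v ∨ g'.Adj (Quotient.mk _ u) (Quotient.mk _ v)) := by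
  simp only [etaQ, SimpleGraph.fromRel_adj]
  grind [SimpleGraph.Adj.symm]

theorem etaQ_asmGraph_adj_iff {g' : SimpleGraph (Quotient (collapse B))}
    (huv : Quotient.mk (collapse B) u ≠ Quotient.mk (collapse B) v) :
    (etaQ (asmGraph g B) B g').Adj u v ↔ g'.Adj (Quotient.mk _ u) (Quotient.mk _ v) := by
  have hne : u ≠ v := fun h => huv (congrArg _ h)
  have hB : ¬ (u ∈ B ∧ v ∈ B) := fun h => huv (mk_collapse_eq_iff.2 (Or.inr h))
  rw [etaQ_adj, asmGraph_adj]
  tauto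

theorem etaQ_asmGraph_injective (g : SimpleGraph V) (B : Set V) :
    Function.Injective (etaQ (asmGraph g B) B) := by
  intro g' g'' h
  ext x y
  induction x using Quotient.ind with | _ u =>
  induction y using Quotient.ind with | _ v =>
  by_cases huv : Quotient.mk (collapse B) u = Quotient.mk _ v
  · simp [huv]
  · rw [← etaQ_asmGraph_adj_iff huv, ← etaQ_asmGraph_adj_iff huv, h]

def IsModule (g : SimpleGraph V) (B : Set V) : Prop :=
  ∀ v : V, v ∉ B → (∃ b ∈ B, g.Adj v b) → ∀ b ∈ B, g.Adj v b

theorem isModule_of_etaQ_asmGraph_eq {g' : SimpleGraph (Quotient (collapse B))}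
    (h : etaQ (asmGraph g B) B g' = g) : IsModule g B := by
  intro v hv ⟨b, hb, hvb⟩ b' hb'
  have hne : ∀ c ∈ B, Quotient.mk (collapse B) v ≠ Quotient.mk _ c := fun c hc hvc => by
    rcases mk_collapse_eq_iff.1 hvc with rfl | hvc
    exacts [hv hc, hv hvc.1]
  have hbb' : Quotient.mk (collapse B) b = Quotient.mk _ b' :=
    mk_collapse_eq_iff.2 (Or.inr ⟨hb, hb'⟩)
  rw [← h] at hvb ⊢
  rw [etaQ_asmGraph_adj_iff (hne b' hb'), ← hbb']
  exact (etaQ_asmGraph_adj_iff (hne b hb)).1 hvb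

def contraction (g : SimpleGraph V) (B : Set V) : SimpleGraph (Quotient (collapse B)) :=
  g.map (Quotient.mk _)

theorem IsModule.contraction_adj_iff (hB : IsModule g B)
    (huv : Quotient.mk (collapse B) u ≠ Quotient.mk (collapse B) v) :
    (contraction g B).Adj (Quotient.mk _ u) (Quotient.mk _ v) ↔ g.Adj u v := by
  refine ⟨?_, fun h => SimpleGraph.map_adj_apply' h huv⟩
  rintro ⟨-, u', v', h, hu, hv⟩
  have hnB : ¬ (u ∈ B ∧ v ∈ B) := fun h => huv (mk_collapse_eq_iff.2 (Or.inr h))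
  rcases mk_collapse_eq_iff.1 hu with rfl | ⟨hu'B, huB⟩ <;>
    rcases mk_collapse_eq_iff.1 hv with rfl | ⟨hv'B, hvB⟩
  · exact h
  · exact hB u' (fun hu' => hnB ⟨hu', hvB⟩) ⟨v', hv'B, h⟩ v hvB
  · exact (hB v' (fun hv' => hnB ⟨huB, hv'⟩) ⟨u', hu'B, h.symm⟩ u huB).symm
  · exact absurd ⟨huB, hvB⟩ hnB

theorem IsModule.etaQ_asmGraph_contraction (hB : IsModule g B) :
    etaQ (asmGraph g B) B (contraction g B) = g := by
  ext u v
  by_cases huv : Quotient.mk (collapse B) u = Quotient.mk _ v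
  · rcases mk_collapse_eq_iff.1 huv with rfl | huvB
    · simp
    · rw [etaQ_adj, asmGraph_adj, huv]
      simp only [SimpleGraph.irrefl, or_false, huvB, and_true]
      exact ⟨And.right, fun h => ⟨h.ne, h⟩⟩
  · rw [etaQ_asmGraph_adj_iff huv, hB.contraction_adj_iff huv]

end Collapse

theorem divides_iff_module_general {V : Type} (g : SimpleGraph V)
    (hg : g.Connected) (B : Set V) :
    ((∃ g' : SimpleGraph (Quotient (collapse B)),
        g'.Connected ∧ etaQ (asmGraph g B) B g' = g)
      ↔ ∀ v : V, v ∉ B → (∃ b ∈ B, g.Adj v b) → ∀ b ∈ B, g.Adj v b) ∧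
    (∀ g' g'' : SimpleGraph (Quotient (collapse B)),
        etaQ (asmGraph g B) B g' = g → etaQ (asmGraph g B) B g'' = g → g' = g'') := by
  refine ⟨⟨fun ⟨_, _, h⟩ => isModule_of_etaQ_asmGraph_eq h, fun hB => ?_⟩, ?_⟩
  · exact ⟨contraction g B, hg.map_of_surjective Quotient.mk_surjective,
      IsModule.etaQ_asmGraph_contraction hB⟩
  · exact fun g' g'' h' h'' => etaQ_asmGraph_injective g B (h'.trans h''.symm)

/-- `g₁` (the induced graph on `B` plus singletons) divides the connected graph
`g` in the graph operad iff `B` is a module of `g`, i.e. every vertex outside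
`B` adjacent to some vertex of `B` is adjacent to every vertex of `B`;
moreover the quotient graph `g'` (the contraction of `B`) is unique. -/
theorem divides_iff_module {V : Type} [Fintype V] (g : SimpleGraph V)
    (hg : g.Connected) (B : Set V) (hB : B.Nonempty) :
    ((∃ g' : SimpleGraph (Quotient (collapse B)),
        g'.Connected ∧ etaQ (asmGraph g B) B g' = g)
      ↔ ∀ v : V, v ∉ B → (∃ b ∈ B, g.Adj v b) → ∀ b ∈ B, g.Adj v b) ∧
    (∀ g' g'' : SimpleGraph (Quotient (collapse B)),
        etaQ (asmGraph g B) B g' = g → etaQ (asmGraph g B) B g'' = g → g' = g'') :=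
  divides_iff_module_general g hg B
end
end
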